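/- arXiv:2105.11778 — 2 statements merged into one kernel-verified Lean document; each statement's English description precedes it below -/
import Mathlib

section
/- Let $I=[t_0,t_0+r]$, let $f:I\times I\times\mathbb{R}\to\mathbb{R}$ be continuous with $|f(t,s,z_1)-f(t,s,z_2)|\le L|z_1-z_2|$ for all $t,s\in I$, $z_1,z_2\in\mathbb{R}$, $L>0$, and let $\varepsilon>0$. If a continuous $y:I\to\mathbb{R}$ satisfies $|y(t)-\int_{t_0}^{t} f(t,s,y(s))\,ds|\le\varepsilon$ on $I$, then for every $\eta>L$ there is a unique continuous solution $y_0$ of $y_0(t)=\int_{t_0}^{t} f(t,s,y_0(s))\,ds$ with $|y(t)-y_0(t)|\le \frac{\varepsilon\, e^{\eta r}}{1-L/\eta}$ on $I$. -/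
/-!
Conjugating the Volterra operator `V g (t) = ∫_{t₀}^t f(t, s, g s) ds` on `C([t₀, t₀ + r])` by
multiplication with the Bielecki weight `e^{η (t - t₀)}` gives an operator that contracts the sup
distance by `L / η < 1`, since `∫_{t₀}^t L e^{η (s - t₀)} ds ≤ (L / η) e^{η (t - t₀)}`; this
replaces the usual smallness condition `L r < 1`. Banach's fixed point theorem yields the unique
solution, and the a priori estimate `dist x x* ≤ dist x (S x) / (1 - L / η)`, applied to the
weighted `y` whose defect is at most `ε`, gives the bound once the weight, at most `e^{η r}`, is
undone.
-/

open Set Real intervalIntegral Function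

lemma integral_exp_mul_sub (a t : ℝ) {η : ℝ} (hη : η ≠ 0) :
    ∫ s in a..t, exp (η * (s - a)) = (exp (η * (t - a)) - 1) / η := by
  simp_rw [mul_sub]
  rw [integral_comp_mul_sub exp hη, integral_exp, sub_self, exp_zero, smul_eq_mul]
  field_simp

section

variable {E : Type*} [NormedAddCommGroup E] {a b : ℝ} (hab : a ≤ b) {f : ℝ → ℝ → E → E}
  (hf : ContinuousOn (fun p : ℝ × ℝ × E => f p.1 p.2.1 p.2.2) (Icc a b ×ˢ Icc a b ×ˢ univ))

include hf in
lemma continuous_volterra_integrand (g : C(Icc a b, E)) :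
    Continuous fun p : Icc a b × ℝ => f p.1 (projIcc a b hab p.2) (g (projIcc a b hab p.2)) :=
  ContinuousOn.comp_continuous (f := fun p : Icc a b × ℝ =>
      ((p.1 : ℝ), (projIcc a b hab p.2 : ℝ), g (projIcc a b hab p.2))) hf (by fun_prop)
    fun p => ⟨p.1.2, (projIcc a b hab p.2).2, trivial⟩

variable [NormedSpace ℝ E]

/-- The integrand is evaluated through `projIcc` so that it is continuous on all of `ℝ`; on `[a, t]`
it is `f t s (g s)`, see `volterraOperator_apply_of_eq`. -/
noncomputable def volterraOperator (g : C(Icc a b, E)) : C(Icc a b, E) where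
  toFun t := ∫ s in a..t, f t (projIcc a b hab s) (g (projIcc a b hab s))
  continuous_toFun :=
    continuous_parametric_intervalIntegral_of_continuous
      (continuous_volterra_integrand hab hf g) continuous_subtype_val

lemma volterraOperator_apply (g : C(Icc a b, E)) (t : Icc a b) :
    volterraOperator hab hf g t = ∫ s in a..t, f t (projIcc a b hab s) (g (projIcc a b hab s)) :=
  rfl

lemma volterraOperator_apply_of_eq {g : C(Icc a b, E)} {F : ℝ → E} (hF : ∀ s, g s = F s)
    (t : Icc a b) : volterraOperator hab hf g t = ∫ s in a..t, f t s (F s) := by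
  refine integral_congr fun s hs => ?_
  rw [uIcc_of_le t.2.1] at hs
  simp only [projIcc_of_mem hab ⟨hs.1, hs.2.trans t.2.2⟩, hF]

noncomputable def bieleckiWeight (a b η : ℝ) : C(Icc a b, ℝ) :=
  ⟨fun t => exp (η * (t - a)), by fun_prop⟩

@[simp]
lemma bieleckiWeight_apply (η : ℝ) (t : Icc a b) :
    bieleckiWeight a b η t = exp (η * (t - a)) :=
  rfl

lemma bieleckiWeight_neg_smul_smul (η : ℝ) (g : C(Icc a b, E)) :
    bieleckiWeight a b (-η) • bieleckiWeight a b η • g = g := by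
  ext t
  simp [smul_smul, ← exp_add]

lemma bieleckiWeight_smul_neg_smul (η : ℝ) (g : C(Icc a b, E)) :
    bieleckiWeight a b η • bieleckiWeight a b (-η) • g = g := by
  simpa using bieleckiWeight_neg_smul_smul (-η) g

lemma dist_bieleckiWeight_smul_apply (η : ℝ) (u v : C(Icc a b, E)) (t : Icc a b) :
    dist ((bieleckiWeight a b η • u) t) ((bieleckiWeight a b η • v) t) =
      exp (η * (t - a)) * dist (u t) (v t) := by
  rw [ContinuousMap.smul_apply', ContinuousMap.smul_apply', dist_smul₀, bieleckiWeight_apply,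
    norm_of_nonneg (exp_pos _).le]

noncomputable def weightedVolterraOperator (η : ℝ) (g : C(Icc a b, E)) : C(Icc a b, E) :=
  bieleckiWeight a b (-η) • volterraOperator hab hf (bieleckiWeight a b η • g)

variable {L η : ℝ}
  (hlip : ∀ t ∈ Icc a b, ∀ s ∈ Icc a b, ∀ z₁ z₂ : E, ‖f t s z₁ - f t s z₂‖ ≤ L * ‖z₁ - z₂‖)

include hlip in
lemma norm_volterraOperator_sub_le (g₁ g₂ : C(Icc a b, E)) (t : Icc a b) :
    ‖volterraOperator hab hf g₁ t - volterraOperator hab hf g₂ t‖ ≤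
      L * ∫ s in a..t, ‖IccExtend hab g₁ s - IccExtend hab g₂ s‖ := by
  have hint (g : C(Icc a b, E)) : IntervalIntegrable
      (fun s => f t (projIcc a b hab s) (g (projIcc a b hab s))) MeasureTheory.volume a t :=
    ((continuous_volterra_integrand hab hf g).comp (Continuous.prodMk_right t)).intervalIntegrable
      _ _
  have hcont : Continuous fun s => ‖IccExtend hab g₁ s - IccExtend hab g₂ s‖ := by
    simp only [← ContinuousMap.coe_IccExtend]
    fun_prop
  rw [volterraOperator_apply, volterraOperator_apply, ← integral_sub (hint g₁) (hint g₂),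
    ← integral_const_mul]
  refine (norm_integral_le_integral_norm t.2.1).trans <|
    integral_mono_on t.2.1 ((hint g₁).sub (hint g₂)).norm
      ((hcont.intervalIntegrable _ _).const_mul L) fun s _ => ?_
  exact hlip _ t.2 _ (projIcc a b hab s).2 _ _

include hlip in
lemma norm_volterraOperator_bieleckiWeight_smul_sub_le (hL : 0 ≤ L) (hη : 0 < η)
    (h₁ h₂ : C(Icc a b, E)) (t : Icc a b) :
    ‖volterraOperator hab hf (bieleckiWeight a b η • h₁) t -
        volterraOperator hab hf (bieleckiWeight a b η • h₂) t‖ ≤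
      L / η * dist h₁ h₂ * exp (η * (t - a)) := by
  have hweighted : ∀ s ∈ Icc a (t : ℝ),
      ‖IccExtend hab (bieleckiWeight a b η • h₁) s - IccExtend hab (bieleckiWeight a b η • h₂) s‖
        ≤ dist h₁ h₂ * exp (η * (s - a)) := fun s hs => by
    have hs' : s ∈ Icc a b := ⟨hs.1, hs.2.trans t.2.2⟩
    rw [IccExtend_of_mem hab _ hs', IccExtend_of_mem hab _ hs', ← dist_eq_norm,
      dist_bieleckiWeight_smul_apply, mul_comm]
    gcongr
    exact ContinuousMap.dist_apply_le_dist _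
  calc _ ≤ L * ∫ s in a..t, ‖IccExtend hab (bieleckiWeight a b η • h₁) s -
          IccExtend hab (bieleckiWeight a b η • h₂) s‖ :=
        norm_volterraOperator_sub_le hab hf hlip _ _ t
    _ ≤ L * ∫ s in a..t, dist h₁ h₂ * exp (η * (s - a)) := by
        gcongr
        refine integral_mono_on t.2.1 (Continuous.intervalIntegrable ?_ _ _)
          (Continuous.intervalIntegrable (by fun_prop) _ _) hweighted
        simp only [← ContinuousMap.coe_IccExtend]
        fun_prop
    _ = L / η * dist h₁ h₂ * (exp (η * (t - a)) - 1) := by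
        rw [integral_const_mul, integral_exp_mul_sub _ _ hη.ne']
        ring
    _ ≤ L / η * dist h₁ h₂ * exp (η * (t - a)) := by
        gcongr
        linarith

include hlip in
lemma contractingWith_weightedVolterraOperator (hL : 0 ≤ L) (hLη : L < η) :
    ContractingWith (L / η).toNNReal (weightedVolterraOperator hab hf η) := by
  have hη : 0 < η := hL.trans_lt hLη
  refine ⟨by simpa using (div_lt_one hη).2 hLη, LipschitzWith.of_dist_le_mul fun h₁ h₂ => ?_⟩
  rw [Real.coe_toNNReal _ (by positivity), ContinuousMap.dist_le (by positivity)]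
  intro t
  calc dist (weightedVolterraOperator hab hf η h₁ t) (weightedVolterraOperator hab hf η h₂ t)
      = exp (-η * (t - a)) * ‖volterraOperator hab hf (bieleckiWeight a b η • h₁) t -
          volterraOperator hab hf (bieleckiWeight a b η • h₂) t‖ := by
        rw [weightedVolterraOperator, weightedVolterraOperator, dist_bieleckiWeight_smul_apply,
          dist_eq_norm]
    _ ≤ exp (-η * (t - a)) * (L / η * dist h₁ h₂ * exp (η * (t - a))) := by
        gcongr
        exact norm_volterraOperator_bieleckiWeight_smul_sub_le hab hf hlip hL hη h₁ h₂ t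
    _ = L / η * dist h₁ h₂ := by
        rw [mul_left_comm, ← exp_add, neg_mul, neg_add_cancel, exp_zero, mul_one]

lemma isFixedPt_weightedVolterraOperator_iff {g : C(Icc a b, E)} :
    IsFixedPt (weightedVolterraOperator hab hf η) g ↔
      IsFixedPt (volterraOperator hab hf) (bieleckiWeight a b η • g) := by
  refine ⟨fun hg => ?_, fun hg => ?_⟩
  · simpa only [IsFixedPt, weightedVolterraOperator, bieleckiWeight_smul_neg_smul] using
      congrArg (bieleckiWeight a b η • ·) hg
  · rw [IsFixedPt, weightedVolterraOperator, hg, bieleckiWeight_neg_smul_smul]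

include hlip in
theorem norm_sub_le_of_isFixedPt_volterraOperator (hL : 0 ≤ L) (hLη : L < η) {ε : ℝ}
    (hε : 0 ≤ ε) {g g₀ : C(Icc a b, E)}
    (hg : ∀ t, ‖g t - volterraOperator hab hf g t‖ ≤ ε)
    (hg₀ : IsFixedPt (volterraOperator hab hf) g₀) (t : Icc a b) :
    ‖g t - g₀ t‖ ≤ ε * exp (η * (b - a)) / (1 - L / η) := by
  have hη : 0 < η := hL.trans_lt hLη
  have hS := contractingWith_weightedVolterraOperator hab hf hlip hL hLη
  set h := bieleckiWeight a b (-η) • g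
  set h₀ := bieleckiWeight a b (-η) • g₀
  have hh₀ : IsFixedPt (weightedVolterraOperator hab hf η) h₀ :=
    (isFixedPt_weightedVolterraOperator_iff hab hf).2 (by rwa [bieleckiWeight_smul_neg_smul])
  have hdefect : dist h (weightedVolterraOperator hab hf η h) ≤ ε := by
    refine (ContinuousMap.dist_le hε).2 fun s => ?_
    rw [weightedVolterraOperator, bieleckiWeight_smul_neg_smul, dist_bieleckiWeight_smul_apply,
      dist_eq_norm]
    have hweight : exp (-η * (s - a)) ≤ 1 :=
      exp_le_one_iff.2 (mul_nonpos_of_nonpos_of_nonneg (neg_nonpos.2 hη.le) (sub_nonneg.2 s.2.1))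
    exact (mul_le_of_le_one_left (norm_nonneg _) hweight).trans (hg s)
  have hdist : dist h h₀ ≤ ε / (1 - L / η) := by
    have : 0 < 1 - L / η := by rw [sub_pos, div_lt_one hη]; exact hLη
    refine (hS.dist_le_of_fixedPoint h hh₀).trans ?_
    rw [Real.coe_toNNReal _ (by positivity)]
    gcongr
  calc ‖g t - g₀ t‖ = exp (η * (t - a)) * dist (h t) (h₀ t) := by
        rw [← dist_bieleckiWeight_smul_apply, bieleckiWeight_smul_neg_smul,
          bieleckiWeight_smul_neg_smul, dist_eq_norm]
    _ ≤ exp (η * (b - a)) * (ε / (1 - L / η)) := by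
        gcongr
        · exact t.2.2
        · exact (ContinuousMap.dist_apply_le_dist t).trans hdist
    _ = ε * exp (η * (b - a)) / (1 - L / η) := by ring

variable [CompleteSpace E]

include hlip in
theorem existsUnique_isFixedPt_volterraOperator (hL : 0 ≤ L) :
    ∃! g, IsFixedPt (volterraOperator hab hf) g := by
  have hS := contractingWith_weightedVolterraOperator hab hf hlip hL (lt_add_one L)
  refine ⟨_, (isFixedPt_weightedVolterraOperator_iff hab hf).1 hS.fixedPoint_isFixedPt,
    fun g hg => ?_⟩
  have hg' : IsFixedPt (weightedVolterraOperator hab hf (L + 1))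
      (bieleckiWeight a b (-(L + 1)) • g) :=
    (isFixedPt_weightedVolterraOperator_iff hab hf).2 (by rwa [bieleckiWeight_smul_neg_smul])
  rw [← hS.fixedPoint_unique' hg' hS.fixedPoint_isFixedPt, bieleckiWeight_smul_neg_smul]

end

/-- Hyers–Ulam stability of `y(t) = ∫_{t₀}^t f(t, s, y(s)) ds` on a finite
closed interval, with no restriction `Lr < 1`. -/
theorem volterra_kernel_HU_stability
    (t₀ r L η ε : ℝ) (hr : 0 < r) (hL : 0 < L) (hη : L < η) (hε : 0 < ε)
    (f : ℝ → ℝ → ℝ → ℝ)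
    (hf : ContinuousOn (fun p : ℝ × ℝ × ℝ => f p.1 p.2.1 p.2.2)
      (Set.Icc t₀ (t₀ + r) ×ˢ Set.Icc t₀ (t₀ + r) ×ˢ Set.univ))
    (hlip : ∀ t ∈ Set.Icc t₀ (t₀ + r), ∀ s ∈ Set.Icc t₀ (t₀ + r), ∀ z₁ z₂ : ℝ,
      |f t s z₁ - f t s z₂| ≤ L * |z₁ - z₂|)
    (y : ℝ → ℝ) (hy : ContinuousOn y (Set.Icc t₀ (t₀ + r)))
    (happrox : ∀ t ∈ Set.Icc t₀ (t₀ + r),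
      |y t - ∫ s in t₀..t, f t s (y s)| ≤ ε) :
    ∃ y₀ : ℝ → ℝ,
      (ContinuousOn y₀ (Set.Icc t₀ (t₀ + r)) ∧
        (∀ t ∈ Set.Icc t₀ (t₀ + r), y₀ t = ∫ s in t₀..t, f t s (y₀ s)) ∧
        (∀ t ∈ Set.Icc t₀ (t₀ + r),
          |y t - y₀ t| ≤ ε * Real.exp (η * r) / (1 - L / η))) ∧
      (∀ z : ℝ → ℝ,
        ContinuousOn z (Set.Icc t₀ (t₀ + r)) →
        (∀ t ∈ Set.Icc t₀ (t₀ + r), z t = ∫ s in t₀..t, f t s (z s)) →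
        (∀ t ∈ Set.Icc t₀ (t₀ + r),
          |y t - z t| ≤ ε * Real.exp (η * r) / (1 - L / η)) →
        ∀ t ∈ Set.Icc t₀ (t₀ + r), z t = y₀ t) := by
  have hab : t₀ ≤ t₀ + r := by linarith
  simp only [← Real.norm_eq_abs] at hlip happrox ⊢
  obtain ⟨g₀, hg₀, huniq⟩ := existsUnique_isFixedPt_volterraOperator hab hf hlip hL.le
  have hfixed {z : ℝ → ℝ} (hz : ContinuousOn z (Icc t₀ (t₀ + r)))
      (hzsol : ∀ t ∈ Icc t₀ (t₀ + r), z t = ∫ s in t₀..t, f t s (z s)) :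
      IsFixedPt (volterraOperator hab hf) ⟨_, hz.domRestrict⟩ :=
    ContinuousMap.ext fun t =>
      (volterraOperator_apply_of_eq hab hf (fun _ => rfl) t).trans (hzsol t t.2).symm
  refine ⟨IccExtend hab g₀, ⟨(g₀.IccExtend hab).continuous.continuousOn, fun t ht => ?_,
    fun t ht => ?_⟩, fun z hz hzsol _ t ht => ?_⟩
  · rw [IccExtend_of_mem hab _ ht]
    exact (DFunLike.congr_fun hg₀ ⟨t, ht⟩).symm.trans
      (volterraOperator_apply_of_eq hab hf (fun s => (IccExtend_val hab g₀ s).symm) ⟨t, ht⟩)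
  · rw [IccExtend_of_mem hab _ ht]
    have := norm_sub_le_of_isFixedPt_volterraOperator hab hf hlip hL.le hη hε.le
      (g := ⟨_, hy.domRestrict⟩) (fun t => by
        rw [volterraOperator_apply_of_eq hab hf (fun _ => rfl)]; exact happrox t t.2) hg₀ ⟨t, ht⟩
    rwa [add_sub_cancel_left] at this
  · rw [IccExtend_of_mem hab _ ht, ← huniq _ (hfixed hz hzsol)]
    rfl
end

section
/- The Volterra integral equation $y(t)=\int_0^t s\,y(s)\,ds$ is Hyers–Ulam–Rassias stable on $[0,2]$ with respect to $\varphi(t)=e^t$: there exists $K>0$ such that every continuous $y:[0,2]\to\mathbb{R}$ with $|y(t)-\int_0^t s\,y(s)\,ds|\le e^t$ for all $t\in[0,2]$ satisfies $|y(t)-y_0(t)|\le K e^t$ on $[0,2]$ for some continuous solution $y_0$ of the equation. -/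
/-!
The zero function solves the equation, so it suffices to bound an approximate solution `y`.
Its primitive `F t = ∫₀ᵗ s y(s) ds` satisfies `|F'| ≤ 2 |y| ≤ 2 (|F| + e²)` on `[0,2]`, and Gronwall's
inequality gives `|y t| ≤ e² e^{2t} ≤ e⁶ ≤ e⁶ eᵗ`.
-/

open Set MeasureTheory Real Topology

lemma gronwallBound_zero_mul (K δ x : ℝ) :
    gronwallBound 0 K (K * δ) x = δ * (exp (K * x) - 1) := by
  rcases eq_or_ne K 0 with rfl | hK
  · simp [gronwallBound_K0]
  · rw [gronwallBound_of_K_ne_0 hK]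
    field_simp
    ring

lemma hasDerivWithinAt_integral_Ici_of_continuousOn {g : ℝ → ℝ} {a b t : ℝ}
    (hg : ContinuousOn g (Icc a b)) (ht : t ∈ Ico a b) :
    HasDerivWithinAt (fun u => ∫ s in a..u, g s) (g t) (Ici t) t := by
  have hmem : Icc a b ∈ 𝓝[>] t := Icc_mem_nhdsGT_of_mem ht
  have hint : IntervalIntegrable g volume a t :=
    (hg.mono (by rw [uIcc_of_le ht.1]; exact Icc_subset_Icc_right ht.2.le)).intervalIntegrable
  exact intervalIntegral.integral_hasDerivWithinAt_right hint
    ⟨Icc a b, hmem, hg.aestronglyMeasurable measurableSet_Icc⟩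
    ((hg t ⟨ht.1, ht.2.le⟩).mono_of_mem_nhdsWithin hmem)

theorem abs_le_mul_exp_of_abs_sub_integral_mul_le {k y : ℝ → ℝ} {a b L δ : ℝ}
    (hk : ContinuousOn k (Icc a b)) (hy : ContinuousOn y (Icc a b))
    (hkL : ∀ s ∈ Icc a b, |k s| ≤ L)
    (happrox : ∀ t ∈ Icc a b, |y t - ∫ s in a..t, k s * y s| ≤ δ) :
    ∀ t ∈ Icc a b, |y t| ≤ δ * exp (L * (t - a)) := by
  set F : ℝ → ℝ := fun u => ∫ s in a..u, k s * y s
  have hky : ContinuousOn (fun s => k s * y s) (Icc a b) := hk.mul hy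
  have hyF : ∀ t ∈ Icc a b, |y t| ≤ δ + |F t| := fun t ht =>
    calc |y t| ≤ |y t - F t| + |F t| := by simpa using abs_sub_le (y t) (F t) 0
      _ ≤ δ + |F t| := by gcongr; exact happrox t ht
  have hFcont : ContinuousOn F (Icc a b) := by
    rcases le_or_gt a b with hab | hab
    · rw [← uIcc_of_le hab] at hky ⊢
      exact intervalIntegral.continuousOn_primitive_interval
        (hky.integrableOn_compact (μ := volume) isCompact_uIcc)
    · simp [Icc_eq_empty_of_lt hab]
  have hF : ∀ t ∈ Icc a b, ‖F t‖ ≤ gronwallBound 0 L (L * δ) (t - a) := by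
    refine norm_le_gronwallBound_of_norm_deriv_right_le hFcont
      (fun t ht => hasDerivWithinAt_integral_Ici_of_continuousOn hky ht) (by simp [F]) ?_
    intro t ht
    have ht' : t ∈ Icc a b := Ico_subset_Icc_self ht
    have hL : 0 ≤ L := (abs_nonneg _).trans (hkL t ht')
    calc ‖k t * y t‖ = |k t| * |y t| := by rw [Real.norm_eq_abs, abs_mul]
      _ ≤ L * (δ + |F t|) :=
          mul_le_mul (hkL t ht') (hyF t ht') (abs_nonneg _) hL
      _ = L * ‖F t‖ + L * δ := by rw [Real.norm_eq_abs]; ring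
  intro t ht
  calc |y t| ≤ δ + |F t| := hyF t ht
    _ ≤ δ + δ * (exp (L * (t - a)) - 1) := by
        gcongr
        simpa only [Real.norm_eq_abs, gronwallBound_zero_mul] using hF t ht
    _ = δ * exp (L * (t - a)) := by ring

/-- Hyers–Ulam–Rassias stability of `y(t) = ∫_0^t s·y(s) ds` on `[0,2]` with
respect to `φ(t) = e^t`. -/
theorem example_volterra_HUR_stable :
    ∃ K : ℝ, 0 < K ∧
      ∀ y : ℝ → ℝ, ContinuousOn y (Set.Icc (0:ℝ) 2) →
        (∀ t ∈ Set.Icc (0:ℝ) 2, |y t - ∫ s in (0:ℝ)..t, s * y s| ≤ Real.exp t) →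
        ∃ y₀ : ℝ → ℝ, ContinuousOn y₀ (Set.Icc (0:ℝ) 2) ∧
          (∀ t ∈ Set.Icc (0:ℝ) 2, y₀ t = ∫ s in (0:ℝ)..t, s * y₀ s) ∧
          (∀ t ∈ Set.Icc (0:ℝ) 2, |y t - y₀ t| ≤ K * Real.exp t) := by
  refine ⟨exp 6, exp_pos 6, fun y hy happrox => ⟨0, continuousOn_const, by simp, ?_⟩⟩
  have hbound := abs_le_mul_exp_of_abs_sub_integral_mul_le (L := 2) (δ := exp 2)
    continuousOn_id hy (fun s hs => by rw [id, abs_of_nonneg hs.1]; exact hs.2)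
    (fun t ht => (happrox t ht).trans (exp_le_exp.mpr ht.2))
  intro t ht
  calc |y t - 0| = |y t| := by rw [sub_zero]
    _ ≤ exp 2 * exp (2 * (t - 0)) := hbound t ht
    _ ≤ exp 2 * exp 4 := by gcongr; linarith [ht.2]
    _ = exp 6 := by rw [← exp_add]; norm_num
    _ ≤ exp 6 * exp t := le_mul_of_one_le_right (exp_pos 6).le (one_le_exp ht.1)
end
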